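/- Assume q_n ≥ c > 0 for all n ∈ ℤ₀. Let φ and θ be the solutions of problem (P) with φ₁ = 1, Δφ₁ = −1 and θ₁ = 1, Δθ₁ = 0. Then there exists a complex number v̂ with Re(v̂ e^{−iδ}) > 0 such that the solution ψ_n = φ_n + v̂ θ_n satisfies (cos δ) ∑_{n=2}^{∞} (|Δψ_n|² + q_n |ψ_n|²) ≤ Re(v̂ e^{−iδ}). -/

import Mathlib

/- Problem (P): −Δ²y_{n−1} + q_n y_n = 0 on ℤ₀ = ℤ \ {0,1}, with impulse conditions
   y_{−1} = y₁, Δy_{−1} = e^{2iδ} Δy₁, for a sequence y : ℤ → ℂ. -/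
def IsSolP (δ : ℝ) (q : ℤ → ℝ) (y : ℤ → ℂ) : Prop :=
  (∀ n : ℤ, n ≠ 0 → n ≠ 1 →
    -(y (n + 1) - 2 * y n + y (n - 1)) + (q n : ℂ) * y n = 0) ∧
  y (-1) = y 1 ∧
  y 0 - y (-1) = Complex.exp (2 * (δ : ℂ) * Complex.I) * (y 2 - y 1)

/-! On the half line `n ≥ 1` only the difference equation matters: writing `Q j = q (j + 2)`,
it reads `p (j + 2) = (2 + Q j) p (j + 1) - p j`. Since `Q ≥ c > 0`, this recurrence has a
positive decreasing solution `p`, obtained from the ratios `r j = p (j + 1) / p j`, which solve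
the continued fraction `r j = 1 / (2 + Q j - r (j + 1))`; normalise it by `p 0 - p 1 = 1`.
Then `ψ = φ + (p 1) θ` takes the values `ψ (j + 1) = p j`, because both sides solve the same
recurrence and agree at `j = 0, 1`. Multiplying the recurrence by `p (j + 1)` makes the energy
`(Δp)² + Q p²` telescope to `p (J + 1) Δp J - p 1 Δp 0 ≤ p 1 (p 0 - p 1) = p 1`, and
`Re (p 1 e^{-iδ}) = p 1 cos δ`. -/

open Filter Topology Finset

namespace HalfLine

noncomputable def ratioIter (Q : ℕ → ℝ) : ℕ → ℕ → ℝ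
  | 0, _ => 0
  | k + 1, j => (2 + Q j - ratioIter Q k (j + 1))⁻¹

noncomputable def ratio (Q : ℕ → ℝ) (j : ℕ) : ℝ := ⨆ k, ratioIter Q k j

noncomputable def decaySol (Q : ℕ → ℝ) : ℕ → ℝ
  | 0 => (1 - ratio Q 0)⁻¹
  | j + 1 => ratio Q j * decaySol Q j

def energy (Q p : ℕ → ℝ) (j : ℕ) : ℝ := (p (j + 2) - p (j + 1)) ^ 2 + Q j * p (j + 1) ^ 2

variable {Q : ℕ → ℝ} {c : ℝ}

lemma ratioIter_mem (hc : 0 ≤ c) (hQ : ∀ j, c ≤ Q j) (k j : ℕ) :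
    0 ≤ ratioIter Q k j ∧ ratioIter Q k j ≤ (1 + c)⁻¹ := by
  induction k generalizing j with
  | zero => exact ⟨le_rfl, by positivity⟩
  | succ k ih =>
    have hinv : (1 + c)⁻¹ ≤ 1 := inv_le_one_of_one_le₀ (by linarith)
    have hden : 1 + c ≤ 2 + Q j - ratioIter Q k (j + 1) := by linarith [hQ j, (ih (j + 1)).2]
    exact ⟨inv_nonneg.2 (by linarith), inv_anti₀ (by linarith) hden⟩

lemma ratioIter_le_succ (hc : 0 ≤ c) (hQ : ∀ j, c ≤ Q j) (k j : ℕ) :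
    ratioIter Q k j ≤ ratioIter Q (k + 1) j := by
  induction k generalizing j with
  | zero => exact (ratioIter_mem hc hQ 1 j).1
  | succ k ih =>
    have hinv : (1 + c)⁻¹ ≤ 1 := inv_le_one_of_one_le₀ (by linarith)
    have hden : 0 < 2 + Q j - ratioIter Q (k + 1) (j + 1) := by
      linarith [hQ j, (ratioIter_mem hc hQ (k + 1) (j + 1)).2]
    exact inv_anti₀ hden (by linarith [ih (j + 1)])

lemma bddAbove_ratioIter (hc : 0 ≤ c) (hQ : ∀ j, c ≤ Q j) (j : ℕ) :
    BddAbove (Set.range fun k => ratioIter Q k j) :=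
  ⟨(1 + c)⁻¹, by rintro _ ⟨k, rfl⟩; exact (ratioIter_mem hc hQ k j).2⟩

lemma tendsto_ratioIter (hc : 0 ≤ c) (hQ : ∀ j, c ≤ Q j) (j : ℕ) :
    Tendsto (fun k => ratioIter Q k j) atTop (𝓝 (ratio Q j)) :=
  tendsto_atTop_ciSup (monotone_nat_of_le_succ fun k => ratioIter_le_succ hc hQ k j)
    (bddAbove_ratioIter hc hQ j)

lemma ratio_le (hc : 0 ≤ c) (hQ : ∀ j, c ≤ Q j) (j : ℕ) : ratio Q j ≤ (1 + c)⁻¹ :=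
  ciSup_le fun k => (ratioIter_mem hc hQ k j).2

lemma ratio_lt_one (hc : 0 < c) (hQ : ∀ j, c ≤ Q j) (j : ℕ) : ratio Q j < 1 :=
  (ratio_le hc.le hQ j).trans_lt (inv_lt_one_of_one_lt₀ (by linarith))

lemma ratio_pos (hc : 0 ≤ c) (hQ : ∀ j, c ≤ Q j) (j : ℕ) : 0 < ratio Q j :=
  calc (0 : ℝ) < (2 + Q j)⁻¹ := inv_pos.2 (by linarith [hQ j])
    _ = ratioIter Q 1 j := by simp [ratioIter]
    _ ≤ ratio Q j := le_ciSup (bddAbove_ratioIter hc hQ j) 1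

lemma two_add_sub_ratio_pos (hc : 0 ≤ c) (hQ : ∀ j, c ≤ Q j) (j : ℕ) :
    0 < 2 + Q j - ratio Q (j + 1) := by
  have hinv : (1 + c)⁻¹ ≤ 1 := inv_le_one_of_one_le₀ (by linarith)
  linarith [hQ j, ratio_le hc hQ (j + 1)]

lemma ratio_eq (hc : 0 ≤ c) (hQ : ∀ j, c ≤ Q j) (j : ℕ) :
    ratio Q j = (2 + Q j - ratio Q (j + 1))⁻¹ := by
  have hsucc : Tendsto (fun k => ratioIter Q (k + 1) j) atTop (𝓝 (ratio Q j)) :=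
    (tendsto_ratioIter hc hQ j).comp (tendsto_add_atTop_nat 1)
  refine tendsto_nhds_unique hsucc ?_
  exact ((tendsto_ratioIter hc hQ (j + 1)).const_sub (2 + Q j)).inv₀
    (two_add_sub_ratio_pos hc hQ j).ne'

lemma decaySol_pos (hc : 0 < c) (hQ : ∀ j, c ≤ Q j) (j : ℕ) : 0 < decaySol Q j := by
  induction j with
  | zero => exact inv_pos.2 (by linarith [ratio_lt_one hc hQ 0])
  | succ j ih => exact mul_pos (ratio_pos hc.le hQ j) ih

lemma decaySol_succ_le (hc : 0 < c) (hQ : ∀ j, c ≤ Q j) (j : ℕ) :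
    decaySol Q (j + 1) ≤ decaySol Q j :=
  mul_le_of_le_one_left (decaySol_pos hc hQ j).le (ratio_lt_one hc hQ j).le

lemma decaySol_zero_sub_one (hc : 0 < c) (hQ : ∀ j, c ≤ Q j) :
    decaySol Q 0 - decaySol Q 1 = 1 := by
  have h : 1 - ratio Q 0 ≠ 0 := (sub_pos.2 (ratio_lt_one hc hQ 0)).ne'
  simp only [decaySol]
  field_simp

lemma decaySol_recurrence (hc : 0 ≤ c) (hQ : ∀ j, c ≤ Q j) (j : ℕ) :
    decaySol Q (j + 2) = (2 + Q j) * decaySol Q (j + 1) - decaySol Q j := by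
  have hr : ratio Q j * (2 + Q j - ratio Q (j + 1)) = 1 := by
    rw [ratio_eq hc hQ j]
    exact inv_mul_cancel₀ (two_add_sub_ratio_pos hc hQ j).ne'
  simp only [decaySol]
  linear_combination (-decaySol Q j) * hr

variable {p : ℕ → ℝ}

lemma sum_range_energy (hp : ∀ j, p (j + 2) = (2 + Q j) * p (j + 1) - p j) (J : ℕ) :
    ∑ j ∈ range J, energy Q p j = p (J + 1) * (p (J + 1) - p J) - p 1 * (p 1 - p 0) := by
  induction J with
  | zero => simp
  | succ J ih =>
    rw [sum_range_succ, ih, energy, hp J]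
    ring

lemma sum_range_energy_le (hp : ∀ j, p (j + 2) = (2 + Q j) * p (j + 1) - p j)
    (hpos : ∀ j, 0 ≤ p j) (hanti : ∀ j, p (j + 1) ≤ p j) (J : ℕ) :
    ∑ j ∈ range J, energy Q p j ≤ p 1 * (p 0 - p 1) := by
  rw [sum_range_energy hp]
  nlinarith [mul_nonneg (hpos (J + 1)) (sub_nonneg.2 (hanti J))]

lemma energy_nonneg (hQ : ∀ j, 0 ≤ Q j) (j : ℕ) : 0 ≤ energy Q p j := by
  have := hQ j
  unfold energy
  positivity

lemma summable_energy (hp : ∀ j, p (j + 2) = (2 + Q j) * p (j + 1) - p j)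
    (hQ : ∀ j, 0 ≤ Q j) (hpos : ∀ j, 0 ≤ p j) (hanti : ∀ j, p (j + 1) ≤ p j) :
    Summable (energy Q p) :=
  summable_of_sum_range_le (energy_nonneg hQ) (sum_range_energy_le hp hpos hanti)

lemma tsum_energy_le (hp : ∀ j, p (j + 2) = (2 + Q j) * p (j + 1) - p j)
    (hQ : ∀ j, 0 ≤ Q j) (hpos : ∀ j, 0 ≤ p j) (hanti : ∀ j, p (j + 1) ≤ p j) :
    ∑' j, energy Q p j ≤ p 1 * (p 0 - p 1) :=
  (summable_energy hp hQ hpos hanti).tsum_le_of_sum_range_le (sum_range_energy_le hp hpos hanti)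

end HalfLine

lemma recurrence_ext {R : Type*} [Ring R] {a u w : ℕ → R}
    (hu : ∀ j, u (j + 2) = a j * u (j + 1) - u j) (hw : ∀ j, w (j + 2) = a j * w (j + 1) - w j)
    (h0 : u 0 = w 0) (h1 : u 1 = w 1) : u = w := by
  have h : ∀ j, u j = w j ∧ u (j + 1) = w (j + 1) := by
    intro j
    induction j with
    | zero => exact ⟨h0, h1⟩
    | succ j ih => exact ⟨ih.2, by rw [hu, hw, ih.1, ih.2]⟩
  exact funext fun j => (h j).1

lemma IsSolP.add_mul {δ : ℝ} {q : ℤ → ℝ} {φ θ : ℤ → ℂ} (hφ : IsSolP δ q φ) (hθ : IsSolP δ q θ)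
    (v : ℂ) : IsSolP δ q (fun n => φ n + v * θ n) := by
  refine ⟨fun n h0 h1 => ?_, ?_, ?_⟩
  · linear_combination hφ.1 n h0 h1 + v * hθ.1 n h0 h1
  · linear_combination hφ.2.1 + v * hθ.2.1
  · linear_combination hφ.2.2 + v * hθ.2.2

lemma IsSolP.eq_of_recurrence {δ : ℝ} {q : ℤ → ℝ} {y : ℤ → ℂ} {p : ℕ → ℝ} (hy : IsSolP δ q y)
    (hp : ∀ j : ℕ, p (j + 2) = (2 + q ((j : ℤ) + 2)) * p (j + 1) - p j)
    (h1 : y 1 = p 0) (h2 : y 2 = p 1) (j : ℕ) : y ((j : ℤ) + 1) = p j := by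
  refine congrFun (recurrence_ext (a := fun j => 2 + (q ((j : ℤ) + 2) : ℂ))
    (u := fun j : ℕ => y ((j : ℤ) + 1)) (w := fun j => (p j : ℂ)) (fun j => ?_) (fun j => ?_)
    (by simpa using h1) (by simpa [one_add_one_eq_two] using h2)) j
  · have h := hy.1 ((j : ℤ) + 2) (by omega) (by omega)
    rw [show (j : ℤ) + 2 - 1 = j + 1 by ring] at h
    push_cast
    rw [show (j : ℤ) + 1 + 1 = j + 2 by ring]
    linear_combination (-1 : ℂ) * h
  · simp only [hp j]
    push_cast
    ring

def intGeTwoEquiv : ℕ ≃ {m : ℤ // 2 ≤ m} where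
  toFun j := ⟨(j : ℤ) + 2, by omega⟩
  invFun m := (m.1 - 2).toNat
  left_inv j := by simp
  right_inv m := Subtype.ext (by have := m.2; simp; omega)

lemma norm_sub_sq_add_mul_norm_sq_eq_energy {ψ : ℤ → ℂ} {p : ℕ → ℝ} (q : ℤ → ℝ)
    (hψ : ∀ j : ℕ, ψ ((j : ℤ) + 1) = p j) (j : ℕ) :
    ‖ψ ((intGeTwoEquiv j : ℤ) + 1) - ψ (intGeTwoEquiv j)‖ ^ 2
        + q (intGeTwoEquiv j) * ‖ψ (intGeTwoEquiv j)‖ ^ 2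
      = HalfLine.energy (fun j : ℕ => q ((j : ℤ) + 2)) p j := by
  have h2 : ψ ((j : ℤ) + 2) = p (j + 1) := by rw [← hψ]; push_cast; ring_nf
  have h3 : ψ ((j : ℤ) + 2 + 1) = p (j + 2) := by rw [← hψ]; push_cast; ring_nf
  simp only [intGeTwoEquiv, Equiv.coe_fn_mk, HalfLine.energy]
  rw [h2, h3, ← Complex.ofReal_sub, Complex.norm_real, Complex.norm_real, Real.norm_eq_abs,
    Real.norm_eq_abs, sq_abs, sq_abs]

lemma re_ofReal_mul_exp_neg_mul_I (x δ : ℝ) :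
    ((x : ℂ) * Complex.exp (-(δ : ℂ) * Complex.I)).re = x * Real.cos δ := by
  rw [← Complex.ofReal_neg, Complex.re_ofReal_mul, Complex.exp_ofReal_mul_I_re, Real.cos_neg]

open HalfLine in
/-- with φ, θ the solutions of (P) satisfying φ₁ = 1, Δφ₁ = −1 and
θ₁ = 1, Δθ₁ = 0, there is v̂ ∈ ℂ with Re(v̂ e^{−iδ}) > 0 such that ψ = φ + v̂ θ
satisfies (cos δ) ∑_{n=2}^{∞} (|Δψ_n|² + q_n |ψ_n|²) ≤ Re(v̂ e^{−iδ}). -/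
theorem right_weyl_solution (δ : ℝ) (hδ : 0 ≤ δ ∧ δ < Real.pi / 2)
    (q : ℤ → ℝ) (c : ℝ) (hc : 0 < c) (hq : ∀ n : ℤ, n ≠ 0 → n ≠ 1 → c ≤ q n)
    (φ θ : ℤ → ℂ) (hφ : IsSolP δ q φ) (hθ : IsSolP δ q θ)
    (hφ1 : φ 1 = 1) (hφ1' : φ 2 - φ 1 = -1)
    (hθ1 : θ 1 = 1) (hθ1' : θ 2 - θ 1 = 0) :
    ∃ v : ℂ, 0 < (v * Complex.exp (-(δ : ℂ) * Complex.I)).re ∧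
      ∃ ψ : ℤ → ℂ, (∀ n : ℤ, ψ n = φ n + v * θ n) ∧
        Summable (fun n : {m : ℤ // 2 ≤ m} =>
          ‖ψ ((n : ℤ) + 1) - ψ (n : ℤ)‖ ^ 2 + q (n : ℤ) * ‖ψ (n : ℤ)‖ ^ 2) ∧
        Real.cos δ *
            (∑' n : {m : ℤ // 2 ≤ m},
              (‖ψ ((n : ℤ) + 1) - ψ (n : ℤ)‖ ^ 2 + q (n : ℤ) * ‖ψ (n : ℤ)‖ ^ 2)) ≤
          (v * Complex.exp (-(δ : ℂ) * Complex.I)).re := by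
  set Q : ℕ → ℝ := fun j => q ((j : ℤ) + 2)
  have hQ : ∀ j, c ≤ Q j := fun j => hq _ (by omega) (by omega)
  set p := decaySol Q
  have hp01 : p 0 - p 1 = 1 := decaySol_zero_sub_one hc hQ
  have hcos : 0 < Real.cos δ := Real.cos_pos_of_mem_Ioo ⟨by linarith [Real.pi_pos], hδ.2⟩
  set ψ : ℤ → ℂ := fun n => φ n + (p 1 : ℂ) * θ n
  have hψ : ∀ j : ℕ, ψ ((j : ℤ) + 1) = p j := by
    refine (hφ.add_mul hθ _).eq_of_recurrence (decaySol_recurrence hc.le hQ) ?_ ?_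
    · simp only [hφ1, hθ1]
      have h : ((p 0 : ℝ) : ℂ) - p 1 = 1 := by exact_mod_cast hp01
      linear_combination -h
    · linear_combination hφ1' + hφ1 + (p 1 : ℂ) * (hθ1' + hθ1)
  have henergy := norm_sub_sq_add_mul_norm_sq_eq_energy q hψ
  have hrec := decaySol_recurrence hc.le hQ
  have hQ0 : ∀ j, 0 ≤ Q j := fun j => hc.le.trans (hQ j)
  have hpos := fun j => (decaySol_pos hc hQ j).le
  have hanti := decaySol_succ_le hc hQ
  refine ⟨p 1, ?_, ψ, fun n => rfl, ?_, ?_⟩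
  · rw [re_ofReal_mul_exp_neg_mul_I]
    exact mul_pos (decaySol_pos hc hQ 1) hcos
  · rw [← intGeTwoEquiv.summable_iff]
    simpa only [Function.comp_def, henergy] using summable_energy hrec hQ0 hpos hanti
  · rw [re_ofReal_mul_exp_neg_mul_I, ← intGeTwoEquiv.tsum_eq]
    simp only [henergy]
    have hsum := tsum_energy_le hrec hQ0 hpos hanti
    rw [hp01, mul_one] at hsum
    rw [mul_comm (p 1)]
    exact mul_le_mul_of_nonneg_left hsum hcos.le
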